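/- Let 1 < p ≤ q < ∞ and α ∈ [0, d). Suppose v, w are weights on ℝ^d such that the pair (v, w) satisfies the A_{p,q}^α condition. Then ‖M_α f‖_{L^{q,∞}(ℝ^d, w dx)} ≤ C [v,w]_{A_{p,q}^α} ‖f‖_{L^p(ℝ^d, v dx)} for all f ∈ L^p(ℝ^d, v dx), where C depends only on α, d and q. -/

import Mathlib

open MeasureTheory ENNReal NNReal Set

noncomputable section

/-- A half-open axis-parallel cube in `ℝ^d`, given by its corner and (positive) sidelength. -/
structure Cube (d : ℕ) where
  corner : Fin d → ℝ
  side : ℝ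
  side_pos : 0 < side

namespace Cube

variable {d : ℕ}

/-- The set of points of the cube: `[x_1, x_1+l) × ⋯ × [x_d, x_d+l)`. -/
def toSet (Q : Cube d) : Set (Fin d → ℝ) :=
  {y | ∀ i, Q.corner i ≤ y i ∧ y i < Q.corner i + Q.side}

/-- The translate `Q + l(Q) m` of a cube. -/
def translate (Q : Cube d) (m : Fin d → ℤ) : Cube d :=
  ⟨fun i => Q.corner i + Q.side * (m i : ℝ), Q.side, Q.side_pos⟩

/-- The corner child `x(Q) + (1/2)(Q - x(Q))` of a cube. -/
def cornerChild (Q : Cube d) : Cube d :=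
  ⟨Q.corner, Q.side / 2, by have := Q.side_pos; linarith⟩

/-- The threefold expansion `x(Q) + 3(Q - x(Q))` of a cube from its corner. -/
def expand3 (Q : Cube d) : Cube d :=
  ⟨Q.corner, 3 * Q.side, by have := Q.side_pos; linarith⟩

/-- The dilate `D_c Q`: cube with the same center as `Q` and sidelength `c·l(Q)`. -/
def dilate (Q : Cube d) (c : ℝ) (hc : 0 < c) : Cube d :=
  ⟨fun i => Q.corner i + Q.side / 2 - c * Q.side / 2, c * Q.side, by
    have := Q.side_pos; positivity⟩

end Cube

/-- A dyadic lattice in `ℝ^d`: a family of generations of cubes, each generation formed by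
all translates of one of its cubes, and each generation containing a cube whose corner child
belongs to the next generation. -/
structure DyadicLattice (d : ℕ) where
  gen : ℤ → Set (Cube d)
  gen_translates : ∀ k, ∃ Q ∈ gen k, gen k = {R | ∃ m : Fin d → ℤ, R = Q.translate m}
  cornerChild_mem : ∀ k, ∃ Q ∈ gen k, Q.cornerChild ∈ gen (k + 1)

/-- The collection of all cubes of a dyadic lattice. -/
def DyadicLattice.cubes {d : ℕ} (D : DyadicLattice d) : Set (Cube d) := ⋃ k, D.gen k

/-- The quadrant of a dyadic lattice containing `x`: the union of all cubes of the lattice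
containing `x`. -/
def DyadicLattice.quadrant {d : ℕ} (D : DyadicLattice d) (x : Fin d → ℝ) :
    Set (Fin d → ℝ) :=
  ⋃ Q ∈ {Q : Cube d | Q ∈ D.cubes ∧ x ∈ Q.toSet}, Q.toSet

/-- A weight: a locally integrable, a.e. positive (and finite) function. -/
def IsWeight {d : ℕ} (w : (Fin d → ℝ) → ℝ) : Prop :=
  LocallyIntegrable w volume ∧ ∀ᵐ x ∂(volume : Measure (Fin d → ℝ)), 0 < w x

/-- The measure `w dx` associated to a weight. -/
def wMeasure {d : ℕ} (w : (Fin d → ℝ) → ℝ) : Measure (Fin d → ℝ) :=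
  volume.withDensity fun x => ENNReal.ofReal (w x)

/-- `w(E) = ∫_E w dx`. -/
def wInt {d : ℕ} (w : (Fin d → ℝ) → ℝ) (E : Set (Fin d → ℝ)) : ℝ≥0∞ :=
  ∫⁻ x in E, ENNReal.ofReal (w x)

/-- The `L^q` norm (with `q = ∞` allowed) of an `ℝ≥0∞`-valued function. -/
def eLpNormENN {X : Type*} [MeasurableSpace X] (g : X → ℝ≥0∞) (q : ℝ≥0∞)
    (μ : Measure X) : ℝ≥0∞ :=
  if q = ∞ then essSup g μ
  else (∫⁻ x, g x ^ q.toReal ∂μ) ^ (1 / q.toReal)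

/-- The weak `L^q` quasinorm (with `q = ∞` allowed, interpreted as the `L^∞` norm) of an
`ℝ≥0∞`-valued function: `sup_{t>0} t · μ{g > t}^{1/q}`. -/
def wnormENN {X : Type*} [MeasurableSpace X] (g : X → ℝ≥0∞) (q : ℝ≥0∞)
    (μ : Measure X) : ℝ≥0∞ :=
  if q = ∞ then essSup g μ
  else ⨆ t : ℝ≥0, (t : ℝ≥0∞) * μ {x | (t : ℝ≥0∞) < g x} ^ (1 / q.toReal)

/-- The weighted dyadic fractional maximal operator
`M^D_{α,w} f(x) = sup_{Q ∈ D, x ∈ Q} w(Q)^{α/d-1} ∫_Q |f| w`. -/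
def MwDyadic {d : ℕ} (D : DyadicLattice d) (α : ℝ) (w f : (Fin d → ℝ) → ℝ)
    (x : Fin d → ℝ) : ℝ≥0∞ :=
  ⨆ (Q : Cube d) (_ : Q ∈ D.cubes) (_ : x ∈ Q.toSet),
    wInt w Q.toSet ^ (α / (d : ℝ) - 1) *
      ∫⁻ y in Q.toSet, (‖f y‖₊ : ℝ≥0∞) * ENNReal.ofReal (w y)

/-- The dyadic fractional maximal operator `M^D_α f(x) = sup_{Q ∈ D, x ∈ Q} |Q|^{α/d} ⨍_Q |f|`. -/
def MfracDyadic {d : ℕ} (D : DyadicLattice d) (α : ℝ) (f : (Fin d → ℝ) → ℝ)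
    (x : Fin d → ℝ) : ℝ≥0∞ :=
  ⨆ (Q : Cube d) (_ : Q ∈ D.cubes) (_ : x ∈ Q.toSet),
    volume Q.toSet ^ (α / (d : ℝ) - 1) * ∫⁻ y in Q.toSet, (‖f y‖₊ : ℝ≥0∞)

/-- The fractional maximal operator `M_α f(x) = sup_{Q ∋ x} |Q|^{α/d} ⨍_Q |f|`,
supremum over all cubes containing `x`. -/
def Mfrac {d : ℕ} (α : ℝ) (f : (Fin d → ℝ) → ℝ) (x : Fin d → ℝ) : ℝ≥0∞ :=
  ⨆ (Q : Cube d) (_ : x ∈ Q.toSet),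
    volume Q.toSet ^ (α / (d : ℝ) - 1) * ∫⁻ y in Q.toSet, (‖f y‖₊ : ℝ≥0∞)

/-- The weighted fractional maximal operator
`M_{α,w} f(x) = sup_{Q ∋ x} w(Q)^{α/d-1} ∫_Q |f| w`, supremum over all cubes containing `x`. -/
def Mwfrac {d : ℕ} (α : ℝ) (w f : (Fin d → ℝ) → ℝ) (x : Fin d → ℝ) : ℝ≥0∞ :=
  ⨆ (Q : Cube d) (_ : x ∈ Q.toSet),
    wInt w Q.toSet ^ (α / (d : ℝ) - 1) *
      ∫⁻ y in Q.toSet, (‖f y‖₊ : ℝ≥0∞) * ENNReal.ofReal (w y)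

/-- An `η`-sparse collection of cubes: each cube `Q` has a measurable subset `G(Q)` with
`|G(Q)| ≥ η|Q|`, the sets `G(Q)` being pairwise disjoint. -/
def IsSparseCubes {d : ℕ} (η : ℝ) (S : Set (Cube d)) : Prop :=
  ∃ G : Cube d → Set (Fin d → ℝ),
    (∀ Q ∈ S, G Q ⊆ Q.toSet ∧ MeasurableSet (G Q) ∧
      ENNReal.ofReal η * volume Q.toSet ≤ volume (G Q)) ∧
    S.PairwiseDisjoint G

/-- The sparse operator `A_S^α f(x) = Σ_{Q ∈ S} χ_Q(x) |Q|^{α/d} ⨍_Q |f|`. -/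
def sparseOp {d : ℕ} (α : ℝ) (S : Set (Cube d)) (f : (Fin d → ℝ) → ℝ)
    (x : Fin d → ℝ) : ℝ≥0∞ :=
  ∑' Q : S, (Q : Cube d).toSet.indicator
    (fun _ => volume (Q : Cube d).toSet ^ (α / (d : ℝ) - 1) *
      ∫⁻ y in (Q : Cube d).toSet, (‖f y‖₊ : ℝ≥0∞)) x

/-- The `A_{p,q}^α` constant of a pair of weights:
`[v,w] = sup_Q |Q|^{α/d-1} (∫_Q v^{-p'/p})^{1/p'} (∫_Q w)^{1/q}` where `p' = p/(p-1)`. -/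
def apqConst {d : ℕ} (p q α : ℝ) (v w : (Fin d → ℝ) → ℝ) : ℝ≥0∞ :=
  ⨆ Q : Cube d,
    volume Q.toSet ^ (α / (d : ℝ) - 1) *
      (∫⁻ x in Q.toSet, ENNReal.ofReal (v x ^ (-(p / (p - 1)) / p))) ^ ((p - 1) / p) *
      (∫⁻ x in Q.toSet, ENNReal.ofReal (w x)) ^ (1 / q)

/-- The Muckenhoupt `A_∞` condition: `sup_Q exp(⨍_Q log w⁻¹) · ⨍_Q w < ∞`. -/
def IsAinfty {d : ℕ} (w : (Fin d → ℝ) → ℝ) : Prop :=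
  ∃ C : ℝ, ∀ Q : Cube d,
    Real.exp (⨍ x in Q.toSet, Real.log (w x)⁻¹ ∂volume) *
      (⨍ x in Q.toSet, w x ∂volume) ≤ C

/-- The Euclidean norm of a point of `ℝ^d`. -/
def euclNorm {d : ℕ} (x : Fin d → ℝ) : ℝ := Real.sqrt (∑ i, x i ^ 2)

/-- The auxiliary maximal operator `M_{T,λ}` controlling oscillations of truncations of `T`:
`M_{T,λ} f(x) = sup_{Q ∋ x} ess sup_{x',x'' ∈ Q} |T(fχ_{ℝ^d∖Q*})(x') − T(fχ_{ℝ^d∖Q*})(x'')|`. -/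
def MT {d : ℕ} (T : ((Fin d → ℝ) → ℝ) → (Fin d → ℝ) → ℝ) (lam : ℝ) (hlam : 0 < lam)
    (f : (Fin d → ℝ) → ℝ) (x : Fin d → ℝ) : ℝ≥0∞ :=
  ⨆ (Q : Cube d) (_ : x ∈ Q.toSet),
    essSup
      (fun z : (Fin d → ℝ) × (Fin d → ℝ) =>
        (‖T (((Q.dilate lam hlam).toSet)ᶜ.indicator f) z.1 -
            T (((Q.dilate lam hlam).toSet)ᶜ.indicator f) z.2‖₊ : ℝ≥0∞))
      ((volume.restrict Q.toSet).prod (volume.restrict Q.toSet))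

end

/-!
Fix a level `t`. Every point of `{M_α f > t}` lies in a cube `Q` with `|Q|^{α/d} ⨍_Q |f| > t`;
the cube of twice the side centred at the point is sandwiched between the open and the closed
sup-norm balls of radius `l(Q)` and costs at most a factor `2^d` in that average. Hölder's
inequality against `v` and the `A_{p,q}^α` condition on this cube give
`t^q w(ball) ≤ (2^d [v,w])^q (∫_{closed ball} |f|^p v)^{q/p}`. Besicovitch's covering theorem
for the sup norm sorts the balls into `N = N(d)` families of disjoint balls, and `q ≥ p` allows
summing over each family, so `t^q w{M_α f > t} ≤ N (2^d [v,w] ‖f‖_{L^p(v)})^q`.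
-/

open MeasureTheory ENNReal NNReal Set Metric

theorem ENNReal.rpow_sub_one_mul_self (a : ℝ≥0∞) {s : ℝ} (hs : 1 ≤ s) :
    a ^ (s - 1) * a = a ^ s := by
  conv_rhs => rw [show s = (s - 1) + 1 by ring]
  rw [ENNReal.rpow_add_of_nonneg _ _ (by linarith) zero_le_one, ENNReal.rpow_one]

theorem ENNReal.rpow_le_rpow_sub_one_mul {a b : ℝ≥0∞} (hab : a ≤ b) {s : ℝ} (hs : 1 ≤ s) :
    a ^ s ≤ b ^ (s - 1) * a := by
  rw [← ENNReal.rpow_sub_one_mul_self a hs]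
  gcongr

theorem ENNReal.mul_rpow_inv_le_of_rpow_mul_le {a b c e : ℝ≥0∞} {q : ℝ} (hq : 0 < q)
    (h : a ^ q * b ≤ c * e ^ q) : a * b ^ (1 / q) ≤ c ^ (1 / q) * e := by
  have hq' : 0 ≤ 1 / q := by positivity
  calc a * b ^ (1 / q) = (a ^ q * b) ^ (1 / q) := by
        rw [ENNReal.mul_rpow_of_nonneg _ _ hq', one_div, ENNReal.rpow_rpow_inv hq.ne']
    _ ≤ (c * e ^ q) ^ (1 / q) := by gcongr
    _ = c ^ (1 / q) * e := by
        rw [ENNReal.mul_rpow_of_nonneg _ _ hq', one_div, ENNReal.rpow_rpow_inv hq.ne']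

/-- Hölder with exponents `p, p'` applied to `g = (g v^{1/p}) · v^{-1/p}`. -/
theorem lintegral_le_weighted_holder {X : Type*} [MeasurableSpace X] {μ : Measure X}
    {p : ℝ} (hp : 1 < p) {v : X → ℝ} (hv_pos : ∀ᵐ x ∂μ, 0 < v x)
    (hv : AEMeasurable (fun x => ENNReal.ofReal (v x)) μ) {g : X → ℝ≥0∞} (hg : AEMeasurable g μ) :
    ∫⁻ x, g x ∂μ ≤ (∫⁻ x, g x ^ p * ENNReal.ofReal (v x) ∂μ) ^ (1 / p) *
      (∫⁻ x, ENNReal.ofReal (v x ^ (-(p / (p - 1)) / p)) ∂μ) ^ ((p - 1) / p) := by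
  have hp0 : 0 < p := by linarith
  have hconj : p.HolderConjugate (p / (p - 1)) :=
    (Real.holderConjugate_iff_eq_conjExponent hp).mpr rfl
  have holder := ENNReal.lintegral_mul_le_Lp_mul_Lq μ hconj
    (hg.mul (hv.pow_const (1 / p))) (hv.pow_const (-(1 / p)))
  have hsplit : ∀ᵐ x ∂μ, g x = g x * ENNReal.ofReal (v x) ^ (1 / p) *
      ENNReal.ofReal (v x) ^ (-(1 / p)) := by
    filter_upwards [hv_pos] with x hx
    rw [mul_assoc, ← ENNReal.rpow_add _ _ (by simpa using hx) ofReal_ne_top]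
    simp
  have hfirst : ∀ x, (g x * ENNReal.ofReal (v x) ^ (1 / p)) ^ p = g x ^ p * ENNReal.ofReal (v x) :=
    fun x => by
      rw [ENNReal.mul_rpow_of_nonneg _ _ hp0.le, ← ENNReal.rpow_mul, one_div_mul_cancel hp0.ne',
        ENNReal.rpow_one]
  have hsecond : ∀ᵐ x ∂μ, (ENNReal.ofReal (v x) ^ (-(1 / p))) ^ (p / (p - 1)) =
      ENNReal.ofReal (v x ^ (-(p / (p - 1)) / p)) := by
    filter_upwards [hv_pos] with x hx
    rw [← ENNReal.rpow_mul, ← ENNReal.ofReal_rpow_of_pos hx,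
      show -(1 / p) * (p / (p - 1)) = -(p / (p - 1)) / p by ring]
  have hexp : 1 / (p / (p - 1)) = (p - 1) / p := one_div_div _ _
  rw [lintegral_congr_ae hsplit]
  refine holder.trans_eq ?_
  simp only [Pi.mul_apply, hfirst, hexp, lintegral_congr_ae hsecond]

section Besicovitch

variable {X : Type*} [MetricSpace X] [TopologicalSpace.SeparableSpace X] [HasBesicovitchCovering X]
  [MeasurableSpace X] [OpensMeasurableSpace X]

theorem HasBesicovitchCovering.exists_measure_le_mul_of_radius_le :
    ∃ N : ℕ, ∀ (μ ν : Measure X) (E : Set X) (R : ℝ),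
      (∀ x ∈ E, ∃ r ∈ Ioc 0 R, ν (ball x r) ≤ μ (closedBall x r)) → ν E ≤ N * μ univ := by
  classical
  obtain ⟨N, τ, hτ, hN⟩ := HasBesicovitchCovering.no_satelliteConfig (α := X)
  refine ⟨N, fun μ ν E R hE => ?_⟩
  choose r hr hνμ using hE
  let balls : Besicovitch.BallPackage E X :=
    { c := Subtype.val
      r := fun x => r x x.2
      rpos := fun x => (hr x x.2).1
      r_bound := R
      r_le := fun x => (hr x x.2).2 }
  obtain ⟨U, hU_disj, hU_cover⟩ := Besicovitch.exist_disjoint_covering_families hτ hN balls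
  have hE_cover : E ⊆ ⋃ i, ⋃ x ∈ U i, ball (balls.c x) (balls.r x) := fun y hy =>
    hU_cover ⟨⟨y, hy⟩, rfl⟩
  have hfamily (i : Fin N) : ν (⋃ x ∈ U i, ball (balls.c x) (balls.r x)) ≤ μ univ := by
    have hcount : (U i).Countable := (hU_disj i).countable_of_nonempty_interior fun x _ =>
      (nonempty_ball.2 (balls.rpos x)).mono (interior_maximal ball_subset_closedBall isOpen_ball)
    calc ν (⋃ x ∈ U i, ball (balls.c x) (balls.r x))
        ≤ ∑' x : U i, ν (ball (balls.c x) (balls.r x)) := measure_biUnion_le ν hcount _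
      _ ≤ ∑' x : U i, μ (closedBall (balls.c x) (balls.r x)) :=
        ENNReal.tsum_le_tsum fun x => hνμ _ _
      _ = μ (⋃ x ∈ U i, closedBall (balls.c x) (balls.r x)) :=
        (measure_biUnion hcount (hU_disj i) fun _ _ => measurableSet_closedBall).symm
      _ ≤ μ univ := measure_mono (subset_univ _)
  calc ν E ≤ ν (⋃ i, ⋃ x ∈ U i, ball (balls.c x) (balls.r x)) := measure_mono hE_cover
    _ ≤ ∑ i, ν (⋃ x ∈ U i, ball (balls.c x) (balls.r x)) := measure_iUnion_fintype_le ν _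
    _ ≤ ∑ _i : Fin N, μ univ := Finset.sum_le_sum fun i _ => hfamily i
    _ = N * μ univ := by simp

theorem HasBesicovitchCovering.exists_measure_le_mul :
    ∃ N : ℕ, ∀ (μ ν : Measure X) (E : Set X),
      (∀ x ∈ E, ∃ r > 0, ν (ball x r) ≤ μ (closedBall x r)) → ν E ≤ N * μ univ := by
  obtain ⟨N, hN⟩ := exists_measure_le_mul_of_radius_le (X := X)
  refine ⟨N, fun μ ν E hE => ?_⟩
  let Eₙ (n : ℕ) : Set X := {x ∈ E | ∃ r ∈ Ioc 0 (n : ℝ), ν (ball x r) ≤ μ (closedBall x r)}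
  have hE_eq : E = ⋃ n, Eₙ n := by
    refine Subset.antisymm (fun x hx => ?_) (iUnion_subset fun n => sep_subset _ _)
    obtain ⟨r, hr, hνμ⟩ := hE x hx
    obtain ⟨n, hn⟩ := exists_nat_ge r
    exact mem_iUnion.2 ⟨n, hx, r, ⟨hr, hn⟩, hνμ⟩
  have hmono : Monotone Eₙ := fun m n hmn x ⟨hx, r, hr, hνμ⟩ =>
    ⟨hx, r, ⟨hr.1, hr.2.trans (Nat.cast_le.2 hmn)⟩, hνμ⟩
  rw [hE_eq, hmono.measure_iUnion]
  exact iSup_le fun n => hN μ ν (Eₙ n) n fun x hx => hx.2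

end Besicovitch

section Weights

variable {d : ℕ}

theorem IsWeight.aemeasurable_ofReal {v : (Fin d → ℝ) → ℝ} (hv : IsWeight v) :
    AEMeasurable (fun x => ENNReal.ofReal (v x)) volume :=
  ENNReal.measurable_ofReal.comp_aemeasurable hv.1.aestronglyMeasurable.aemeasurable

theorem IsWeight.volume_absolutelyContinuous {v : (Fin d → ℝ) → ℝ} (hv : IsWeight v) :
    volume ≪ wMeasure v :=
  withDensity_absolutelyContinuous' hv.aemeasurable_ofReal <|
    hv.2.mono fun _ hx => by simpa using hx

theorem wMeasure_apply (w : (Fin d → ℝ) → ℝ) {s : Set (Fin d → ℝ)} (hs : MeasurableSet s) :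
    wMeasure w s = wInt w s :=
  withDensity_apply _ hs

theorem eLpNorm_wMeasure_rpow {v : (Fin d → ℝ) → ℝ}
    (hv : AEMeasurable (fun x => ENNReal.ofReal (v x)) volume) {p : ℝ} (hp : 0 < p)
    (f : (Fin d → ℝ) → ℝ) :
    eLpNorm f (ENNReal.ofReal p) (wMeasure v) ^ p =
      ∫⁻ x, (‖f x‖₊ : ℝ≥0∞) ^ p * ENNReal.ofReal (v x) := by
  rw [eLpNorm_eq_lintegral_rpow_enorm_toReal (by simpa using hp) ofReal_ne_top,
    ENNReal.toReal_ofReal hp.le, ← ENNReal.rpow_mul, one_div_mul_cancel hp.ne', ENNReal.rpow_one,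
    wMeasure, lintegral_withDensity_eq_lintegral_mul_non_measurable₀ _ hv
      (.of_forall fun _ => ofReal_lt_top)]
  simp only [Pi.mul_apply, enorm_eq_nnnorm, mul_comm]

end Weights

namespace Cube

variable {d : ℕ}

theorem toSet_eq_pi (Q : Cube d) :
    Q.toSet = univ.pi fun i => Ico (Q.corner i) (Q.corner i + Q.side) := by
  ext y; simp [toSet, mem_pi]

theorem measurableSet_toSet (Q : Cube d) : MeasurableSet Q.toSet := by
  rw [toSet_eq_pi]; exact .univ_pi fun _ => measurableSet_Ico

theorem volume_toSet (Q : Cube d) : volume Q.toSet = ENNReal.ofReal Q.side ^ d := by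
  simp [toSet_eq_pi, volume_pi_pi, Real.volume_Ico]

def centered (x : Fin d → ℝ) (r : ℝ) (hr : 0 < r) : Cube d :=
  ⟨fun i => x i - r, 2 * r, by linarith⟩

theorem ball_subset_centered (x : Fin d → ℝ) {r : ℝ} (hr : 0 < r) :
    ball x r ⊆ (centered x r hr).toSet := by
  intro y hy i
  have := (dist_pi_lt_iff hr).1 (mem_ball.1 hy) i
  rw [Real.dist_eq, abs_sub_lt_iff] at this
  simp only [centered]
  constructor <;> linarith

theorem centered_subset_closedBall (x : Fin d → ℝ) {r : ℝ} (hr : 0 < r) :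
    (centered x r hr).toSet ⊆ closedBall x r := by
  intro y hy
  refine mem_closedBall.2 <| (dist_pi_le_iff hr.le).2 fun i => ?_
  have := hy i
  simp only [centered] at this
  rw [Real.dist_eq, abs_sub_le_iff]
  constructor <;> linarith

theorem toSet_subset_centered {Q : Cube d} {x : Fin d → ℝ} (hx : x ∈ Q.toSet) :
    Q.toSet ⊆ (centered x Q.side Q.side_pos).toSet := by
  intro y hy i
  have := hx i
  have := hy i
  simp only [centered]
  constructor <;> linarith

/-- `2^d |R|^{α/d-1} = (2^d)^{α/d} |Q|^{α/d-1}` and `(2^d)^{α/d} ≥ 1`. -/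
theorem volume_rpow_le_two_pow_mul {α : ℝ} (hα : 0 ≤ α) {Q R : Cube d}
    (hR : R.side = 2 * Q.side) :
    volume Q.toSet ^ (α / d - 1) ≤ 2 ^ d * volume R.toSet ^ (α / d - 1) := by
  have hR_vol : volume R.toSet = 2 ^ d * volume Q.toSet := by
    rw [volume_toSet, volume_toSet, hR, ENNReal.ofReal_mul zero_le_two, mul_pow, ofReal_ofNat]
  have h2d : (2 : ℝ≥0∞) ^ d ≠ ⊤ := pow_ne_top ofNat_ne_top
  have hQ : volume Q.toSet ≠ ⊤ := by rw [volume_toSet]; exact pow_ne_top ofReal_ne_top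
  have hgain : 1 ≤ ((2 : ℝ≥0∞) ^ d) ^ (α / d) := by
    simpa using ENNReal.rpow_le_rpow_of_exponent_le (one_le_pow₀ one_le_two)
      (by positivity : (0 : ℝ) ≤ α / d)
  calc volume Q.toSet ^ (α / d - 1)
      ≤ ((2 : ℝ≥0∞) ^ d) ^ (α / d) * volume Q.toSet ^ (α / d - 1) :=
        le_mul_of_one_le_left' hgain
    _ = 2 ^ d * volume R.toSet ^ (α / d - 1) := by
      rw [hR_vol, ENNReal.mul_rpow_of_ne_top h2d hQ, ← mul_assoc]
      congr 1
      conv_lhs => rw [show α / d = 1 + (α / d - 1) by ring]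
      rw [ENNReal.rpow_add _ _ (pow_ne_zero d two_ne_zero) h2d, ENNReal.rpow_one]

noncomputable def fracAverage (α : ℝ) (f : (Fin d → ℝ) → ℝ) (Q : Cube d) : ℝ≥0∞ :=
  volume Q.toSet ^ (α / d - 1) * ∫⁻ y in Q.toSet, (‖f y‖₊ : ℝ≥0∞)

theorem lt_Mfrac_iff {α : ℝ} {f : (Fin d → ℝ) → ℝ} {x : Fin d → ℝ} {t : ℝ≥0∞} :
    t < Mfrac α f x ↔ ∃ Q : Cube d, x ∈ Q.toSet ∧ t < Q.fracAverage α f := by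
  simp only [Mfrac, lt_iSup_iff, fracAverage, exists_prop]

theorem fracAverage_le_centered {α : ℝ} (hα : 0 ≤ α) (f : (Fin d → ℝ) → ℝ) {Q : Cube d}
    {x : Fin d → ℝ} (hx : x ∈ Q.toSet) :
    Q.fracAverage α f ≤ 2 ^ d * (centered x Q.side Q.side_pos).fracAverage α f := by
  rw [fracAverage, fracAverage, ← mul_assoc]
  exact mul_le_mul' (volume_rpow_le_two_pow_mul hα rfl)
    (lintegral_mono_set (toSet_subset_centered hx))

theorem fracAverage_mul_wInt_rpow_le {p q α : ℝ} (hp : 1 < p) {v w f : (Fin d → ℝ) → ℝ}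
    (hv : IsWeight v) (hf : AEMeasurable f volume) (R : Cube d) :
    R.fracAverage α f * wInt w R.toSet ^ (1 / q) ≤ apqConst p q α v w *
      (∫⁻ y in R.toSet, (‖f y‖₊ : ℝ≥0∞) ^ p * ENNReal.ofReal (v y)) ^ (1 / p) := by
  set I := ∫⁻ y in R.toSet, (‖f y‖₊ : ℝ≥0∞) ^ p * ENNReal.ofReal (v y)
  set S := ∫⁻ y in R.toSet, ENNReal.ofReal (v y ^ (-(p / (p - 1)) / p))
  have holder : ∫⁻ y in R.toSet, (‖f y‖₊ : ℝ≥0∞) ≤ I ^ (1 / p) * S ^ ((p - 1) / p) :=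
    lintegral_le_weighted_holder hp (ae_restrict_of_ae hv.2) hv.aemeasurable_ofReal.restrict
      hf.nnnorm.coe_nnreal_ennreal.restrict
  have htest : volume R.toSet ^ (α / d - 1) * S ^ ((p - 1) / p) * wInt w R.toSet ^ (1 / q) ≤
      apqConst p q α v w := by
    unfold apqConst
    exact le_iSup_of_le R le_rfl
  calc R.fracAverage α f * wInt w R.toSet ^ (1 / q)
      ≤ volume R.toSet ^ (α / d - 1) * (I ^ (1 / p) * S ^ ((p - 1) / p)) *
          wInt w R.toSet ^ (1 / q) := by
        rw [fracAverage]; gcongr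
    _ = volume R.toSet ^ (α / d - 1) * S ^ ((p - 1) / p) * wInt w R.toSet ^ (1 / q) *
          I ^ (1 / p) := by ring
    _ ≤ apqConst p q α v w * I ^ (1 / p) := by gcongr

theorem rpow_mul_wInt_centered_le {p q α : ℝ} (hp : 1 < p) (hq : 0 < q) (hα : 0 ≤ α)
    {v w f : (Fin d → ℝ) → ℝ} (hv : IsWeight v) (hf : AEMeasurable f volume) {Q : Cube d}
    {x : Fin d → ℝ} (hx : x ∈ Q.toSet) {t : ℝ≥0∞} (ht : t ≤ Q.fracAverage α f) :
    t ^ q * wInt w (centered x Q.side Q.side_pos).toSet ≤ (2 ^ d * apqConst p q α v w) ^ q *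
      (∫⁻ y in (centered x Q.side Q.side_pos).toSet,
        (‖f y‖₊ : ℝ≥0∞) ^ p * ENNReal.ofReal (v y)) ^ (q / p) := by
  set R := centered x Q.side Q.side_pos
  set I := ∫⁻ y in R.toSet, (‖f y‖₊ : ℝ≥0∞) ^ p * ENNReal.ofReal (v y)
  have hroot : t * wInt w R.toSet ^ (1 / q) ≤ 2 ^ d * apqConst p q α v w * I ^ (1 / p) :=
    calc t * wInt w R.toSet ^ (1 / q)
        ≤ 2 ^ d * (R.fracAverage α f * wInt w R.toSet ^ (1 / q)) := by
          rw [← mul_assoc]; gcongr; exact ht.trans (fracAverage_le_centered hα f hx)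
      _ ≤ 2 ^ d * (apqConst p q α v w * I ^ (1 / p)) :=
          mul_le_mul_right (fracAverage_mul_wInt_rpow_le hp hv hf R) _
      _ = _ := (mul_assoc _ _ _).symm
  calc t ^ q * wInt w R.toSet = (t * wInt w R.toSet ^ (1 / q)) ^ q := by
        rw [ENNReal.mul_rpow_of_nonneg _ _ hq.le, one_div, ENNReal.rpow_inv_rpow hq.ne']
    _ ≤ (2 ^ d * apqConst p q α v w * I ^ (1 / p)) ^ q := by gcongr
    _ = (2 ^ d * apqConst p q α v w) ^ q * I ^ (q / p) := by
        rw [ENNReal.mul_rpow_of_nonneg _ _ hq.le, ← ENNReal.rpow_mul, one_div_mul_eq_div]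

end Cube

theorem exists_rpow_mul_wMeasure_lt_Mfrac_le (d : ℕ) :
    ∃ N : ℕ, ∀ {p q α : ℝ}, 1 < p → p ≤ q → 0 ≤ α → ∀ {v w f : (Fin d → ℝ) → ℝ}, IsWeight v →
      AEMeasurable f volume → ∀ t : ℝ≥0∞,
        t ^ q * wMeasure w {x | t < Mfrac α f x} ≤
          N * (2 ^ d * apqConst p q α v w * eLpNorm f (ENNReal.ofReal p) (wMeasure v)) ^ q := by
  obtain ⟨N, hN⟩ := HasBesicovitchCovering.exists_measure_le_mul (X := Fin d → ℝ)
  refine ⟨N, fun {p q α} hp hpq hα v w f hv hf t => ?_⟩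
  have hp0 : 0 < p := by linarith
  have hq0 : 0 < q := by linarith
  have hqp : 1 ≤ q / p := (one_le_div hp0).2 hpq
  set B := 2 ^ d * apqConst p q α v w
  set μf := volume.withDensity fun y => (‖f y‖₊ : ℝ≥0∞) ^ p * ENNReal.ofReal (v y)
  have hμf_univ : μf univ = eLpNorm f (ENNReal.ofReal p) (wMeasure v) ^ p := by
    rw [eLpNorm_wMeasure_rpow hv.aemeasurable_ofReal hp0, withDensity_apply _ MeasurableSet.univ,
      Measure.restrict_univ]
  -- As `q/p ≥ 1`, `I^{q/p} ≤ (μf univ)^{q/p-1} I` for each local mass `I`: this linearization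
  -- lets the Besicovitch families of disjoint balls be summed.
  have hball : ∀ x ∈ {x | t < Mfrac α f x}, ∃ r > 0,
      (t ^ q • wMeasure w) (ball x r) ≤
        ((B ^ q * μf univ ^ (q / p - 1)) • μf) (closedBall x r) := by
    intro x hx
    obtain ⟨Q, hxQ, htQ⟩ := Cube.lt_Mfrac_iff.1 hx
    refine ⟨Q.side, Q.side_pos, ?_⟩
    set R := Cube.centered x Q.side Q.side_pos
    simp only [Measure.smul_apply, smul_eq_mul]
    calc t ^ q * wMeasure w (ball x Q.side) ≤ t ^ q * wInt w R.toSet := by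
          rw [← wMeasure_apply w R.measurableSet_toSet]
          gcongr
          exact Cube.ball_subset_centered x _
      _ ≤ B ^ q * μf R.toSet ^ (q / p) := by
          rw [withDensity_apply _ R.measurableSet_toSet]
          exact Cube.rpow_mul_wInt_centered_le hp hq0 hα hv hf hxQ htQ.le
      _ ≤ B ^ q * (μf univ ^ (q / p - 1) * μf (closedBall x Q.side)) := by
          gcongr
          refine (ENNReal.rpow_le_rpow_sub_one_mul (measure_mono (subset_univ _)) hqp).trans ?_
          gcongr
          exact Cube.centered_subset_closedBall x _
      _ = B ^ q * μf univ ^ (q / p - 1) * μf (closedBall x Q.side) := (mul_assoc _ _ _).symm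
  calc t ^ q * wMeasure w {x | t < Mfrac α f x}
      = (t ^ q • wMeasure w) {x | t < Mfrac α f x} := rfl
    _ ≤ N * ((B ^ q * μf univ ^ (q / p - 1)) • μf) univ := hN _ _ _ hball
    _ = N * (B ^ q * μf univ ^ (q / p)) := by
        rw [Measure.smul_apply, smul_eq_mul, mul_assoc, ENNReal.rpow_sub_one_mul_self _ hqp]
    _ = N * (B * eLpNorm f (ENNReal.ofReal p) (wMeasure v)) ^ q := by
        rw [hμf_univ, ← ENNReal.rpow_mul, mul_div_cancel₀ _ hp0.ne',
          ← ENNReal.mul_rpow_of_nonneg _ _ hq0.le]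

theorem two_weight_weak_type_fractional_maximal_general
    {d : ℕ} (q α : ℝ) (hq : 1 < q)
    (hα0 : 0 ≤ α) :
    ∃ C : ℝ≥0∞, C ≠ ∞ ∧
      ∀ p : ℝ, 1 < p → p ≤ q →
        ∀ v w : (Fin d → ℝ) → ℝ, IsWeight v → IsWeight w →
          apqConst p q α v w ≠ ∞ →
          ∀ f : (Fin d → ℝ) → ℝ, MemLp f (ENNReal.ofReal p) (wMeasure v) →
            wnormENN (Mfrac α f) (ENNReal.ofReal q) (wMeasure w)
              ≤ C * apqConst p q α v w * eLpNorm f (ENNReal.ofReal p) (wMeasure v) := by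
  obtain ⟨N, hN⟩ := exists_rpow_mul_wMeasure_lt_Mfrac_le d
  have hq0 : 0 < q := by linarith
  refine ⟨(N : ℝ≥0∞) ^ (1 / q) * 2 ^ d,
    mul_ne_top (rpow_ne_top_of_nonneg (by positivity) (natCast_ne_top N)) (pow_ne_top ofNat_ne_top),
    fun p hp hpq v w hv _ _ f hf => ?_⟩
  have hf_meas : AEMeasurable f volume :=
    hf.aestronglyMeasurable.aemeasurable.mono_ac hv.volume_absolutelyContinuous
  simp only [wnormENN, if_neg ofReal_ne_top, toReal_ofReal hq0.le]
  refine iSup_le fun t => ?_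
  rw [mul_assoc, mul_assoc, ← mul_assoc (2 ^ d)]
  exact ENNReal.mul_rpow_inv_le_of_rpow_mul_le hq0 (hN hp hpq hα0 hv hf_meas t)

/-- two-weight weak type estimate for the fractional maximal operator. -/
theorem two_weight_weak_type_fractional_maximal
    {d : ℕ} (hd : 0 < d) (q α : ℝ) (hq : 1 < q)
    (hα0 : 0 ≤ α) (hαd : α < d) :
    ∃ C : ℝ≥0∞, C ≠ ∞ ∧
      ∀ p : ℝ, 1 < p → p ≤ q →
        ∀ v w : (Fin d → ℝ) → ℝ, IsWeight v → IsWeight w →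
          apqConst p q α v w ≠ ∞ →
          ∀ f : (Fin d → ℝ) → ℝ, MemLp f (ENNReal.ofReal p) (wMeasure v) →
            wnormENN (Mfrac α f) (ENNReal.ofReal q) (wMeasure w)
              ≤ C * apqConst p q α v w * eLpNorm f (ENNReal.ofReal p) (wMeasure v) :=
  two_weight_weak_type_fractional_maximal_general q α hq hα0
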